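/- Let |c₀⟩, |c₁⟩ be unit vectors in ℂ² with 0 < |⟨c₀|c₁⟩| < 1. Any unitary U on ℂ²⊗ℂ² satisfying U(|c_k⟩⊗|c_l⟩) = e^{iφ_{kl}}(|c_m⟩⊗|c_n⟩) for all k,l ∈ {0,1} (with m,n depending on k,l) must, up to a global phase, induce one of exactly 8 permutations on the index pairs (k,l): the identity, the swap (k,l)↦(l,k), the flip of both indices, flip-both-then-swap, the flip of the first index, flip-first-then-swap, the flip of the second index, and flip-second-then-swap. -/

import Mathlib

/-!
A unitary preserves inner products, so the phases drop out and
`|⟨c_{f p} | c_{f q}⟩| = |⟨c_p | c_q⟩|` for the product states `c_p = c_k ⊗ c_l`.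
Such an inner product factorises and equals `s ^ d(p, q)`, where `s = |⟨c₀|c₁⟩|` and `d` is the
Hamming distance on index pairs. As `0 < s < 1`, `f` is an isometry of the square
`{0,1}²`, and the square has exactly eight isometries.
-/

open Matrix

/-- The inner product ⟨x|y⟩ on ℂ². -/
noncomputable def inp (x y : Fin 2 → ℂ) : ℂ := star x ⬝ᵥ y

/-- The tensor product a ⊗ b of two vectors of ℂ², as a vector of ℂ²⊗ℂ². -/
def tv (a b : Fin 2 → ℂ) : Fin 2 × Fin 2 → ℂ := fun p => a p.1 * b p.2

def pairHammingDist (p q : Fin 2 × Fin 2) : ℕ :=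
  (if p.1 = q.1 then 0 else 1) + (if p.2 = q.2 then 0 else 1)

set_option maxRecDepth 10000 in
theorem eq_isometry_of_pairHammingDist (f : Fin 2 × Fin 2 → Fin 2 × Fin 2)
    (h : ∀ p q, pairHammingDist (f p) (f q) = pairHammingDist p q) :
    f = id ∨
    f = (fun kl => (kl.2, kl.1)) ∨
    f = (fun kl => (1 - kl.1, 1 - kl.2)) ∨
    f = (fun kl => (1 - kl.2, 1 - kl.1)) ∨
    f = (fun kl => (1 - kl.1, kl.2)) ∨
    f = (fun kl => (kl.2, 1 - kl.1)) ∨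
    f = (fun kl => (kl.1, 1 - kl.2)) ∨
    f = (fun kl => (1 - kl.2, kl.1)) := by
  revert f
  decide

theorem star_mulVec_dotProduct_mulVec_of_mem_unitaryGroup {n α : Type*} [Fintype n]
    [DecidableEq n] [CommRing α] [StarRing α] {U : Matrix n n α}
    (hU : U ∈ Matrix.unitaryGroup n α) (x y : n → α) :
    star (U *ᵥ x) ⬝ᵥ U *ᵥ y = star x ⬝ᵥ y := by
  rw [star_mulVec, dotProduct_mulVec, vecMul_vecMul, ← star_eq_conjTranspose, hU.1,
    vecMul_one]

theorem norm_star_smul_dotProduct_smul_exp {n : Type*} [Fintype n] (θ ψ : ℝ)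
    (x y : n → ℂ) :
    ‖star (Complex.exp (Complex.I * θ) • x) ⬝ᵥ Complex.exp (Complex.I * ψ) • y‖
      = ‖star x ⬝ᵥ y‖ := by
  simp only [star_smul, smul_dotProduct, dotProduct_smul, smul_eq_mul, norm_mul, norm_star,
    Complex.norm_exp_I_mul_ofReal, one_mul]

theorem star_tv_dotProduct_tv (a b a' b' : Fin 2 → ℂ) :
    star (tv a b) ⬝ᵥ tv a' b' = inp a a' * inp b b' := by
  simp only [tv, inp, dotProduct, Fintype.sum_prod_type, Fin.sum_univ_two, Pi.star_apply,
    star_mul']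
  ring

theorem norm_inp_comm (x y : Fin 2 → ℂ) : ‖inp y x‖ = ‖inp x y‖ := by
  rw [inp, inp, ← norm_star, star_dotProduct, star_star, dotProduct_comm]

theorem norm_inp_eq_pow (c : Fin 2 → Fin 2 → ℂ) (hunit : ∀ k, inp (c k) (c k) = 1)
    (k k' : Fin 2) :
    ‖inp (c k) (c k')‖ = ‖inp (c 0) (c 1)‖ ^ (if k = k' then 0 else 1 : ℕ) := by
  fin_cases k <;> fin_cases k' <;> simp [hunit, norm_inp_comm (c 1) (c 0)]

theorem norm_star_tv_dotProduct_tv (c : Fin 2 → Fin 2 → ℂ)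
    (hunit : ∀ k, inp (c k) (c k) = 1) (p q : Fin 2 × Fin 2) :
    ‖star (tv (c p.1) (c p.2)) ⬝ᵥ tv (c q.1) (c q.2)‖
      = ‖inp (c 0) (c 1)‖ ^ pairHammingDist p q := by
  rw [star_tv_dotProduct_tv, norm_mul, norm_inp_eq_pow c hunit p.1 q.1,
    norm_inp_eq_pow c hunit p.2 q.2,
    pairHammingDist, pow_add]

/-- Any superposition-free unitary on two qubits (free states c 0, c 1 per qubit,
non-orthogonal and non-parallel) induces, up to global phase, one of exactly
eight permutations on the index pairs (k,l): identity, swap, flip both,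
flip-both-then-swap, flip first, flip-first-then-swap, flip second,
flip-second-then-swap. -/
theorem stmt_3 (c : Fin 2 → Fin 2 → ℂ)
    (hunit : ∀ k, inp (c k) (c k) = 1)
    (hlow : 0 < ‖inp (c 0) (c 1)‖)
    (hup : ‖inp (c 0) (c 1)‖ < 1)
    (U : Matrix (Fin 2 × Fin 2) (Fin 2 × Fin 2) ℂ)
    (hU : U ∈ Matrix.unitaryGroup (Fin 2 × Fin 2) ℂ)
    (f : Fin 2 × Fin 2 → Fin 2 × Fin 2) (φ : Fin 2 × Fin 2 → ℝ)
    (hfree : ∀ kl : Fin 2 × Fin 2,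
      U.mulVec (tv (c kl.1) (c kl.2))
        = Complex.exp (Complex.I * φ kl) • tv (c (f kl).1) (c (f kl).2)) :
    f = id ∨
    f = (fun kl => (kl.2, kl.1)) ∨
    f = (fun kl => (1 - kl.1, 1 - kl.2)) ∨
    f = (fun kl => (1 - kl.2, 1 - kl.1)) ∨
    f = (fun kl => (1 - kl.1, kl.2)) ∨
    f = (fun kl => (kl.2, 1 - kl.1)) ∨
    f = (fun kl => (kl.1, 1 - kl.2)) ∨
    f = (fun kl => (1 - kl.2, kl.1)) := by
  refine eq_isometry_of_pairHammingDist f fun p q => ?_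
  have hnorm := congrArg (‖·‖) <| star_mulVec_dotProduct_mulVec_of_mem_unitaryGroup hU
    (tv (c p.1) (c p.2)) (tv (c q.1) (c q.2))
  simp only [hfree, norm_star_smul_dotProduct_smul_exp, norm_star_tv_dotProduct_tv c hunit]
    at hnorm
  exact (pow_right_strictAnti₀ hlow hup).injective hnorm
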